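/- arXiv:1209.1860 — 4 statements merged into one kernel-verified Lean document; each statement's English description precedes it below -/
import Mathlib

section
/- Let p ≡ 1 (mod 4) be prime, F = ℚ(√p) ⊂ ℝ with ring of integers 𝒪, and let m be a positive integer such that every prime divisor q of m satisfies (q/p) ≠ 1, where (·/p) is the Legendre symbol (i.e., no prime divisor of m splits in F). If ν ∈ F satisfies √p·ν ∈ 𝒪 and N_{F/ℚ}(ν) = −m²/p, then there exists a unit u ∈ 𝒪ˣ with N_{F/ℚ}(u) = 1 such that ν = m·u/√p or ν = −m·u/√p. -/
/-!
Write `ν = x + y √p`. The element `√p ν = p y + x √p` is integral iff its trace `A = 2 p y` and its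
norm are integers; since `p` is squarefree this makes `B = 2 x` an integer as well, and the norm
condition becomes `A² - p B² = 4 m²`. Every prime `q ∣ m` is inert or ramified, which forces `q ∣ A`
and `q ∣ B`: for odd `q ≠ p` because `p` is a non-residue mod `q` by quadratic reciprocity, for
`q = 2` because `p ≡ 5 (mod 8)`, and for `q = p` directly. Descending along the prime factors of `m`
gives `m ∣ A` and `m ∣ B`, so `u = √p ν / m = (A / m + (B / m) √p) / 2` has integer trace and
norm `1`.
-/

open Polynomial

theorem Rat.exists_int_eq_of_squarefree_mul_sq {d : ℤ} (hd : Squarefree d) {r : ℚ} {k : ℤ}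
    (h : d * r ^ 2 = k) : ∃ n : ℤ, (n : ℚ) = r := by
  have hnum : d * r.num ^ 2 = k * (r.den : ℤ) ^ 2 := by
    have := congrArg (· * (r.den : ℚ) ^ 2) h
    simp only [mul_assoc, ← mul_pow, Rat.mul_den_eq_num] at this
    exact_mod_cast this
  have hcop : IsCoprime ((r.den : ℤ) ^ 2) (r.num ^ 2) :=
    (Int.isCoprime_iff_gcd_eq_one.2 (by simpa [Int.gcd, Nat.coprime_comm] using r.reduced)).pow
  have hden : ((r.den : ℤ) * r.den) ∣ d := by
    rw [← sq]
    exact hcop.dvd_of_dvd_mul_right ⟨k, by rw [hnum, mul_comm]⟩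
  have : r.den = 1 := by exact_mod_cast Int.isUnit_iff_natAbs_eq.1 (hd _ hden)
  exact ⟨r.num, Rat.coe_int_num_of_den_eq_one this⟩

theorem exists_int_eq_coeff_minpoly_rat {S : Type*} [CommRing S] [IsDomain S] [Algebra ℚ S]
    {t : S} (ht : IsIntegral ℤ t) (n : ℕ) : ∃ a : ℤ, (a : ℚ) = (minpoly ℚ t).coeff n :=
  ⟨(minpoly ℤ t).coeff n, by
    rw [minpoly.isIntegrallyClosed_eq_field_fractions' ℚ ht, coeff_map, eq_intCast]⟩

theorem isIntegral_of_sq_sub_mul_add_eq_zero {S : Type*} [CommRing S] {t : S} (a b : ℤ)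
    (h : t ^ 2 - a * t + b = 0) : IsIntegral ℤ t :=
  ⟨X ^ 2 - C a * X + C b, by monicity!, by rw [← aeval_def]; simpa using h⟩

section QuadraticField

variable {p : ℕ}

theorem minpoly_rat_add_mul_sqrt (hp : Irrational √p) (r : ℚ) {s : ℚ} (hs : s ≠ 0) :
    minpoly ℚ ((r : ℝ) + s * √p) = X ^ 2 - C (2 * r) * X + C (r ^ 2 - p * s ^ 2) := by
  set t : ℝ := r + s * √p
  have hmonic : (X ^ 2 - C (2 * r) * X + C (r ^ 2 - p * s ^ 2)).Monic := by monicity!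
  have hroot : aeval t (X ^ 2 - C (2 * r) * X + C (r ^ 2 - p * s ^ 2)) = 0 := by
    simp only [t, map_add, map_sub, map_mul, map_pow, aeval_X, aeval_C, eq_ratCast]
    push_cast
    linear_combination (s : ℝ) ^ 2 * Real.sq_sqrt (Nat.cast_nonneg p)
  have hint : IsIntegral ℚ t := ⟨_, hmonic, hroot⟩
  have hirr : t ∉ (algebraMap ℚ ℝ).range := by
    rintro ⟨q, hq⟩
    exact (hp.ratCast_mul hs).ratCast_add r ⟨q, hq⟩
  refine (eq_of_monic_of_dvd_of_natDegree_le (minpoly.monic hint) hmonic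
    (minpoly.dvd ℚ t hroot) ?_).symm
  rw [← minpoly.two_le_natDegree_iff hint] at hirr
  have : (X ^ 2 - C (2 * r) * X + C (r ^ 2 - p * s ^ 2)).natDegree = 2 := by compute_degree!
  omega

theorem isIntegral_add_mul_sqrt_iff (hp : Irrational √p) (r s : ℚ) :
    IsIntegral ℤ ((r : ℝ) + s * √p) ↔
      (∃ a : ℤ, (a : ℚ) = 2 * r) ∧ ∃ b : ℤ, (b : ℚ) = r ^ 2 - p * s ^ 2 := by
  constructor
  · intro h
    rcases eq_or_ne s 0 with rfl | hs
    · simp only [Rat.cast_zero, zero_mul, add_zero] at h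
      obtain ⟨n, rfl⟩ := IsIntegrallyClosed.isIntegral_iff.1
        ((isIntegral_algebraMap_iff (algebraMap ℚ ℝ).injective).1 h)
      exact ⟨⟨2 * n, by simp⟩, ⟨n ^ 2, by simp⟩⟩
    · obtain ⟨a, ha⟩ := exists_int_eq_coeff_minpoly_rat h 1
      obtain ⟨b, hb⟩ := exists_int_eq_coeff_minpoly_rat h 0
      rw [minpoly_rat_add_mul_sqrt hp r hs] at ha hb
      simp only [coeff_add, coeff_sub, coeff_X_pow, coeff_C_mul, coeff_X_one, coeff_X_zero,
        coeff_C_zero, coeff_C_succ] at ha hb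
      norm_num at ha hb
      exact ⟨⟨-a, by push_cast; linarith⟩, ⟨b, hb⟩⟩
  · rintro ⟨⟨a, ha⟩, ⟨b, hb⟩⟩
    refine isIntegral_of_sq_sub_mul_add_eq_zero a b ?_
    have ha' : (a : ℝ) = 2 * r := by exact_mod_cast ha
    have hb' : (b : ℝ) = r ^ 2 - p * s ^ 2 := by exact_mod_cast hb
    rw [ha', hb']
    linear_combination (s : ℝ) ^ 2 * Real.sq_sqrt (Nat.cast_nonneg p)

theorem exists_int_eq_two_mul_of_isIntegral_sqrt_mul (hsq : Squarefree p) (hirr : Irrational √p)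
    {x y : ℚ} (h : IsIntegral ℤ (√p * (x + y * √p))) :
    (∃ A : ℤ, (A : ℚ) = 2 * p * y) ∧ ∃ B : ℤ, (B : ℚ) = 2 * x := by
  obtain ⟨⟨A, hA⟩, ⟨e, he⟩⟩ := (isIntegral_add_mul_sqrt_iff hirr (p * y) x).1 (by
    convert h using 1
    push_cast
    linear_combination -(y : ℝ) * Real.sq_sqrt (Nat.cast_nonneg p))
  refine ⟨⟨A, by rw [hA, mul_assoc]⟩, ?_⟩
  exact Rat.exists_int_eq_of_squarefree_mul_sq (Int.squarefree_natCast.2 hsq)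
    (k := A ^ 2 - 4 * e) (by push_cast; rw [hA, he]; ring)

end QuadraticField

theorem Prime.dvd_of_sq_dvd_sq_sub_mul_sq {R : Type*} [CommRing R] [IsDomain R] {π A B : R}
    (hπ : Prime π)
    (h : π ^ 2 ∣ A ^ 2 - π * B ^ 2) : π ∣ A ∧ π ∣ B := by
  have hA2 : π ∣ A ^ 2 := by
    have := ((dvd_pow_self π two_ne_zero).trans h).add (dvd_mul_right π (B ^ 2))
    rwa [sub_add_cancel] at this
  obtain ⟨A, rfl⟩ := hπ.dvd_of_dvd_pow hA2
  have hB2 : π * π ∣ π * B ^ 2 := by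
    have := (dvd_mul_right (π ^ 2) (A ^ 2)).sub h
    rwa [mul_pow, sub_sub_cancel, sq π] at this
  exact ⟨dvd_mul_right π A, hπ.dvd_of_dvd_pow ((mul_dvd_mul_iff_left hπ.ne_zero).1 hB2)⟩

theorem Int.two_dvd_of_eight_dvd_sq_sub_mul_sq {d A B : ℤ} (hd : d % 8 = 5)
    (h : 8 ∣ A ^ 2 - d * B ^ 2) : 2 ∣ A ∧ 2 ∣ B := by
  have key : ∀ a b : ZMod 8, a ^ 2 - 5 * b ^ 2 = 0 → 4 * a = 0 ∧ 4 * b = 0 := by decide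
  have hd' : (d : ZMod 8) = 5 := by simpa [hd] using (ZMod.intCast_mod d 8).symm
  obtain ⟨hA, hB⟩ := key A B (by
    rw [← hd']; exact_mod_cast (ZMod.intCast_zmod_eq_zero_iff_dvd _ 8).2 h)
  have hA' : (8 : ℤ) ∣ 4 * A := (ZMod.intCast_zmod_eq_zero_iff_dvd _ 8).1 (by push_cast; exact hA)
  have hB' : (8 : ℤ) ∣ 4 * B := (ZMod.intCast_zmod_eq_zero_iff_dvd _ 8).1 (by push_cast; exact hB)
  omega

theorem Int.dvd_of_dvd_sq_sub_mul_sq_of_not_isSquare {q : ℕ} [Fact q.Prime] {d A B : ℤ}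
    (hd : ¬IsSquare (d : ZMod q)) (h : (q : ℤ) ∣ A ^ 2 - d * B ^ 2) :
    (q : ℤ) ∣ A ∧ (q : ℤ) ∣ B := by
  simp only [← ZMod.intCast_zmod_eq_zero_iff_dvd] at h ⊢
  push_cast at h
  have hB : (B : ZMod q) = 0 := by
    by_contra hB
    exact hd ⟨A / B, by field_simp; linear_combination -h⟩
  rw [hB] at h
  exact ⟨pow_eq_zero_iff two_ne_zero |>.1 (by simpa using h), hB⟩

namespace legendreSym

variable {p : ℕ} [Fact p.Prime]

theorem mod_eight_eq_five_of_two_ne_one (hp4 : p % 4 = 1) (h : legendreSym p 2 ≠ 1) :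
    p % 8 = 5 := by
  have hp2 : p ≠ 2 := by omega
  have h2 : ((2 : ℤ) : ZMod p) ≠ 0 := by
    rw [Ne, ZMod.intCast_zmod_eq_zero_iff_dvd]
    intro hdvd
    have := Int.le_of_dvd two_pos hdvd
    have := (Fact.out : p.Prime).two_le
    omega
  have : ¬(p % 8 = 1 ∨ p % 8 = 7) := fun h8 =>
    h ((eq_one_iff p h2).2 (by exact_mod_cast (ZMod.exists_sq_eq_two_iff hp2).2 h8))
  omega

theorem not_isSquare_of_ne_one {q : ℕ} [Fact q.Prime] (hp4 : p % 4 = 1) (hq2 : q ≠ 2)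
    (hqp : q ≠ p) (h : legendreSym p q ≠ 1) : ¬IsSquare ((p : ℤ) : ZMod q) := by
  have hp0 : ((p : ℤ) : ZMod q) ≠ 0 := by
    rw [Ne, Int.cast_natCast, ZMod.natCast_eq_zero_iff]
    exact fun hdvd => hqp ((Nat.prime_dvd_prime_iff_eq Fact.out Fact.out).1 hdvd)
  rwa [← eq_one_iff q hp0, quadratic_reciprocity_one_mod_four hp4 hq2]

theorem prime_dvd_of_four_mul_sq_dvd_sq_sub_mul_sq (hp4 : p % 4 = 1) {q : ℕ} (hq : q.Prime)
    (hpq : legendreSym p q ≠ 1) {A B : ℤ} (h : 4 * (q : ℤ) ^ 2 ∣ A ^ 2 - p * B ^ 2) :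
    (q : ℤ) ∣ A ∧ (q : ℤ) ∣ B := by
  have : Fact q.Prime := ⟨hq⟩
  by_cases hqp : q = p
  · subst hqp
    exact (Nat.prime_iff_prime_int.1 hq).dvd_of_sq_dvd_sq_sub_mul_sq ((dvd_mul_left _ _).trans h)
  by_cases hq2 : q = 2
  · subst hq2
    have hp8 : (p : ℤ) % 8 = 5 := by have := mod_eight_eq_five_of_two_ne_one hp4 hpq; omega
    exact Int.two_dvd_of_eight_dvd_sq_sub_mul_sq hp8 ((by norm_num : (8 : ℤ) ∣ 4 * 2 ^ 2).trans h)
  exact Int.dvd_of_dvd_sq_sub_mul_sq_of_not_isSquare (not_isSquare_of_ne_one hp4 hq2 hqp hpq)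
    (((dvd_pow_self _ two_ne_zero).trans (dvd_mul_left _ _)).trans h)

theorem dvd_of_four_mul_sq_dvd_sq_sub_mul_sq (hp4 : p % 4 = 1) {m : ℕ} (hm : m ≠ 0)
    (hsplit : ∀ q : ℕ, q.Prime → q ∣ m → legendreSym p q ≠ 1) {A B : ℤ}
    (h : 4 * (m : ℤ) ^ 2 ∣ A ^ 2 - p * B ^ 2) : (m : ℤ) ∣ A ∧ (m : ℤ) ∣ B := by
  induction m using Nat.recOnMul generalizing A B with
  | zero => exact absurd rfl hm
  | one => simp
  | prime q hq => exact prime_dvd_of_four_mul_sq_dvd_sq_sub_mul_sq hp4 hq (hsplit q hq dvd_rfl) h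
  | mul a b iha ihb =>
    obtain ⟨ha, hb⟩ := mul_ne_zero_iff.1 hm
    obtain ⟨⟨A, rfl⟩, ⟨B, rfl⟩⟩ := iha ha (fun q hq hqa => hsplit q hq (hqa.mul_right b))
      ((Dvd.intro ((b : ℤ) ^ 2) (by push_cast; ring)).trans h)
    have hAB : 4 * (b : ℤ) ^ 2 ∣ A ^ 2 - p * B ^ 2 := by
      refine (mul_dvd_mul_iff_left (pow_ne_zero 2 (Int.natCast_ne_zero.2 ha))).1 ?_
      rwa [show (4 : ℤ) * ((a * b : ℕ) : ℤ) ^ 2 = (a : ℤ) ^ 2 * (4 * b ^ 2) by push_cast; ring,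
        show ((a : ℤ) * A) ^ 2 - p * (a * B) ^ 2 = (a : ℤ) ^ 2 * (A ^ 2 - p * B ^ 2) by ring] at h
    obtain ⟨hA, hB⟩ := ihb hb (fun q hq hqb => hsplit q hq (hqb.mul_left a)) hAB
    push_cast
    exact ⟨mul_dvd_mul_left _ hA, mul_dvd_mul_left _ hB⟩

end legendreSym

/-- Let `p ≡ 1 (mod 4)` be prime, `F = ℚ(√p) ⊂ ℝ` with ring of integers `𝒪`, and `m` a
positive integer all of whose prime divisors `q` satisfy `(q/p) ≠ 1`. If `ν = x + y√p ∈ F`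
satisfies `√p·ν ∈ 𝒪` (i.e. `√p·ν` is integral over `ℤ`) and `N_{F/ℚ}(ν) = x² − p·y² = −m²/p`,
then there is a unit `u = c + d√p` of `𝒪` (both `u` and its conjugate are integral and
`N(u) = u·ū = 1`) such that `ν = m·u/√p` or `ν = −m·u/√p`. -/
theorem inverse_different_norm_elements (p m : ℕ) (hp : p.Prime) (hmod : p % 4 = 1)
    (hm : 0 < m)
    (hq : ∀ q : ℕ, q.Prime → q ∣ m → @legendreSym p ⟨hp⟩ (q : ℤ) ≠ 1)
    (x y : ℚ)
    (hint : IsIntegral ℤ (Real.sqrt p * ((x : ℝ) + (y : ℝ) * Real.sqrt p)))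
    (hnorm : x ^ 2 - (p : ℚ) * y ^ 2 = -(m : ℚ) ^ 2 / p) :
    ∃ c d : ℚ,
      IsIntegral ℤ ((c : ℝ) + (d : ℝ) * Real.sqrt p) ∧
      IsIntegral ℤ ((c : ℝ) - (d : ℝ) * Real.sqrt p) ∧
      ((c : ℝ) + (d : ℝ) * Real.sqrt p) * ((c : ℝ) - (d : ℝ) * Real.sqrt p) = 1 ∧
      ((x : ℝ) + (y : ℝ) * Real.sqrt p
          = (m : ℝ) * ((c : ℝ) + (d : ℝ) * Real.sqrt p) / Real.sqrt p ∨
        (x : ℝ) + (y : ℝ) * Real.sqrt p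
          = -((m : ℝ) * ((c : ℝ) + (d : ℝ) * Real.sqrt p) / Real.sqrt p)) := by
  have : Fact p.Prime := ⟨hp⟩
  have hsqrt : √(p : ℝ) ^ 2 = p := Real.sq_sqrt (Nat.cast_nonneg p)
  have hirr : Irrational √(p : ℝ) := hp.irrational_sqrt
  obtain ⟨⟨A, hA⟩, ⟨B, hB⟩⟩ := exists_int_eq_two_mul_of_isIntegral_sqrt_mul hp.squarefree hirr hint
  have hpQ : (p : ℚ) ≠ 0 := by exact_mod_cast hp.ne_zero
  field_simp at hnorm
  have hAB : A ^ 2 - p * B ^ 2 = 4 * (m : ℤ) ^ 2 := by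
    have : (A : ℚ) ^ 2 - p * B ^ 2 = 4 * (m : ℚ) ^ 2 := by
      rw [hA, hB]
      linear_combination (-4 : ℚ) * hnorm
    exact_mod_cast this
  obtain ⟨⟨a, rfl⟩, ⟨b, rfl⟩⟩ := legendreSym.dvd_of_four_mul_sq_dvd_sq_sub_mul_sq hmod hm.ne' hq
    (A := A) (B := B) (by rw [hAB])
  have hab : ((a : ℚ) / 2) ^ 2 - p * ((b : ℚ) / 2) ^ 2 = 1 := by
    have h : (m : ℤ) ^ 2 * (a ^ 2 - p * b ^ 2) = (m : ℤ) ^ 2 * 4 := by linear_combination hAB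
    have h4 : (a : ℚ) ^ 2 - p * b ^ 2 = 4 := by
      exact_mod_cast mul_left_cancel₀ (pow_ne_zero 2 (by exact_mod_cast hm.ne')) h
    linear_combination h4 / 4
  have habR : ((a : ℝ) / 2) ^ 2 - p * ((b : ℝ) / 2) ^ 2 = 1 := by exact_mod_cast hab
  refine ⟨a / 2, b / 2, ?_, ?_, ?_, Or.inl ?_⟩
  · exact (isIntegral_add_mul_sqrt_iff hirr _ _).2 ⟨⟨a, by ring⟩, ⟨1, by rw [hab]; simp⟩⟩
  · simpa [sub_eq_add_neg] using (isIntegral_add_mul_sqrt_iff hirr (a / 2) (-(b / 2))).2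
      ⟨⟨a, by ring⟩, ⟨1, by rw [neg_sq, hab]; simp⟩⟩
  · push_cast
    linear_combination habR - ((b : ℝ) / 2) ^ 2 * hsqrt
  · have hAR : (m : ℝ) * a = 2 * p * y := by exact_mod_cast hA
    have hBR : (m : ℝ) * b = 2 * x := by exact_mod_cast hB
    rw [eq_div_iff hirr.ne_zero]
    push_cast
    linear_combination (y : ℝ) * hsqrt - hAR / 2 - √(p : ℝ) * hBR / 2
end

section
/- Let p ≡ 1 (mod 4) be prime, F = ℚ(√p) with ring of integers 𝒪, and let σ₁, σ₂ : F → ℝ be the two real embeddings (σ₁(√p) = √p > 0, σ₂(x) = σ₁(x̄)). Let k be an integer, μ : SL₂(𝒪) → ℂ a function, and g : ℍ × ℍ → ℂ a function satisfying, for every γ = [[α, β], [c, δ]] ∈ SL₂(𝒪) and all (z₁, z₂) ∈ ℍ²: g(σ₁(γ)·z₁, σ₂(γ)·z₂) = μ(γ)·(σ₁(c)z₁ + σ₁(δ))^k·(σ₂(c)z₂ + σ₂(δ))^k·g(z₁, z₂), where σᵢ(γ) acts on ℍ by Möbius transformations. Define f(z₁, z₂) = g(p·z₂, p·z₁). Then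 for every γ = [[α, β], [p·c, δ]] ∈ Γ₀(p) (so α, β, c, δ ∈ 𝒪, αδ − βpc = 1) and all (z₁, z₂) ∈ ℍ²: f(σ₁(γ)·z₁, σ₂(γ)·z₂) = μ̃(γ)·(p·σ₁(c)z₁ + σ₁(δ))^k·(p·σ₂(c)z₂ + σ₂(δ))^k·f(z₁, z₂), where μ̃(γ) := μ([[ᾱ, p·β̄], [c̄, δ̄]]). -/
/-- Lemma 5.8 of the paper. Let `p ≡ 1 (mod 4)` be prime and `F = ℚ(√p)` (an abstract field
`F` with a square root `sqp` of `p` generating it over `ℚ`), with Galois conjugation `τ`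
and the two real embeddings `σ₁, σ₂` (`σ₁ sqp = √p > 0`, `σ₂ = σ₁ ∘ τ`). Suppose
`g : ℍ × ℍ → ℂ` transforms like a Hilbert modular form of weight `k` with multiplier
system `μ` under `SL₂(𝒪)` (matrices with entries integral over `ℤ` and determinant `1`),
where the action on each factor is by Möbius transformations. Define `f(z₁, z₂) = g(p·z₂, p·z₁)`.
Then `f` transforms like a Hilbert modular form of weight `k` under the congruence subgroup
`Γ₀(p)` (lower-left entry in the ideal `(p)`), with multiplier system
`μ̃([[α, β], [pc, δ]]) = μ([[τα, p·τβ], [τc, τδ]])`. -/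
theorem hilbert_modular_form_level_p (p : ℕ) (hp : p.Prime) (hmod : p % 4 = 1)
    (F : Type*) [Field F] [Algebra ℚ F]
    (sqp : F) (hsq : sqp ^ 2 = (p : F))
    (hgen : ∀ x : F, ∃ u v : ℚ, x = algebraMap ℚ F u + algebraMap ℚ F v * sqp)
    (τ : F →+* F) (hτ : τ sqp = -sqp)
    (σ₁ σ₂ : F →+* ℝ) (hσ₁ : σ₁ sqp = Real.sqrt p)
    (hσ₂ : ∀ x : F, σ₂ x = σ₁ (τ x))
    (k : ℤ) (μ : F → F → F → F → ℂ) (g : ℂ → ℂ → ℂ)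
    (hg : ∀ α β c δ : F, IsIntegral ℤ α → IsIntegral ℤ β → IsIntegral ℤ c →
      IsIntegral ℤ δ → α * δ - β * c = 1 →
      ∀ z₁ z₂ : ℂ, 0 < z₁.im → 0 < z₂.im →
        g (((σ₁ α : ℂ) * z₁ + (σ₁ β : ℂ)) / ((σ₁ c : ℂ) * z₁ + (σ₁ δ : ℂ)))
          (((σ₂ α : ℂ) * z₂ + (σ₂ β : ℂ)) / ((σ₂ c : ℂ) * z₂ + (σ₂ δ : ℂ))) =
        μ α β c δ * ((σ₁ c : ℂ) * z₁ + (σ₁ δ : ℂ)) ^ k *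
          ((σ₂ c : ℂ) * z₂ + (σ₂ δ : ℂ)) ^ k * g z₁ z₂)
    (f : ℂ → ℂ → ℂ) (hf : ∀ z₁ z₂ : ℂ, f z₁ z₂ = g ((p : ℂ) * z₂) ((p : ℂ) * z₁)) :
    ∀ α β c δ : F, IsIntegral ℤ α → IsIntegral ℤ β → IsIntegral ℤ c →
      IsIntegral ℤ δ → α * δ - β * ((p : F) * c) = 1 →
      ∀ z₁ z₂ : ℂ, 0 < z₁.im → 0 < z₂.im →
        f (((σ₁ α : ℂ) * z₁ + (σ₁ β : ℂ)) / ((σ₁ ((p : F) * c) : ℂ) * z₁ + (σ₁ δ : ℂ)))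
          (((σ₂ α : ℂ) * z₂ + (σ₂ β : ℂ)) / ((σ₂ ((p : F) * c) : ℂ) * z₂ + (σ₂ δ : ℂ))) =
        μ (τ α) ((p : F) * τ β) (τ c) (τ δ) *
          ((p : ℂ) * (σ₁ c : ℂ) * z₁ + (σ₁ δ : ℂ)) ^ k *
          ((p : ℂ) * (σ₂ c : ℂ) * z₂ + (σ₂ δ : ℂ)) ^ k * f z₁ z₂ := by

  intro α β c δ hα hβ hc hδ hdet z₁ z₂ hz₁ hz₂
  have hτQ : ∀ u : ℚ, τ (algebraMap ℚ F u) = algebraMap ℚ F u := by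
    intro u
    have : τ.comp (algebraMap ℚ F) = algebraMap ℚ F := Subsingleton.elim _ _
    exact RingHom.congr_fun this u
  have hττ : ∀ x : F, τ (τ x) = x := by
    intro x
    obtain ⟨u, v, rfl⟩ := hgen x
    simp [map_add, map_mul, hτQ, hτ]
  have hσ₂τ : ∀ x : F, σ₂ (τ x) = σ₁ x := by
    intro x; rw [hσ₂, hττ]
  have hτint : ∀ x : F, IsIntegral ℤ x → IsIntegral ℤ (τ x) := fun x hx =>
    hx.map τ.toIntAlgHom
  have hpInt : IsIntegral ℤ ((p : F)) := by
    have := isIntegral_algebraMap (R := ℤ) (A := F) (x := (p : ℤ))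
    simpa using this
  have hdet' : τ α * τ δ - (p : F) * τ β * τ c = 1 := by
    have h := congrArg τ hdet
    simp only [map_sub, map_mul, map_natCast, map_one] at h
    linear_combination h
  have hp0 : (0 : ℝ) < p := by exact_mod_cast hp.pos
  have him : ∀ z : ℂ, 0 < z.im → 0 < ((p : ℂ) * z).im := by
    intro z hz
    simp only [Complex.mul_im, Complex.natCast_re, Complex.natCast_im, zero_mul, add_zero]
    positivity
  have key := hg (τ α) ((p : F) * τ β) (τ c) (τ δ) (hτint α hα)
    (hpInt.mul (hτint β hβ)) (hτint c hc) (hτint δ hδ) hdet'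
    ((p : ℂ) * z₂) ((p : ℂ) * z₁) (him z₂ hz₂) (him z₁ hz₁)
  simp only [map_mul, map_natCast, hσ₂τ, ← hσ₂] at key
  rw [hf, hf]
  have e₁ : (p : ℂ) * (((σ₂ α : ℂ) * z₂ + (σ₂ β : ℂ)) /
      ((σ₂ ((p : F) * c) : ℂ) * z₂ + (σ₂ δ : ℂ))) =
      ((σ₂ α : ℂ) * ((p : ℂ) * z₂) + ((p : ℝ) * σ₂ β : ℝ)) /
      ((σ₂ c : ℂ) * ((p : ℂ) * z₂) + (σ₂ δ : ℂ)) := by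
    simp only [map_mul, map_natCast]
    push_cast
    ring
  have e₂ : (p : ℂ) * (((σ₁ α : ℂ) * z₁ + (σ₁ β : ℂ)) /
      ((σ₁ ((p : F) * c) : ℂ) * z₁ + (σ₁ δ : ℂ))) =
      ((σ₁ α : ℂ) * ((p : ℂ) * z₁) + ((p : ℝ) * σ₁ β : ℝ)) /
      ((σ₁ c : ℂ) * ((p : ℂ) * z₁) + (σ₁ δ : ℂ)) := by
    simp only [map_mul, map_natCast]
    push_cast
    ring
  rw [e₁, e₂, key]
  push_cast
  ring
end

section
/- For every real number x ≥ 2, Σ_{c > x} τ(c)·c^{−3/2} ≤ 12·x^{−1/2}·log x, where the sum ranges over all integers c > x, τ(c) denotes the number of positive divisors of c, and log is the natural logarithm; in particular the series converges. -/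
/-!
Counting the pairs `(a, b)` with `a * b = c`, the sum equals `∑_a a^{-3/2} T(x / a)`, where
`T(y) = ∑_{b > y} b^{-3/2}`. Comparing `b^{-3/2}` with `2 (b - 1)^{-1/2} - 2 b^{-1/2}` gives
`T(y) ≤ 3 y^{-1/2}` for `y ≥ 1`. Hence the terms with `a ≤ x` contribute at most
`3 x^{-1/2} H_{⌊x⌋} ≤ 3 x^{-1/2} (1 + log x)` and those with `a > x` at most
`ζ(3/2) T(x) ≤ 3 ζ(3/2) x^{-1/2}`, which is enough once `log x > 2`. For `2 ≤ x ≤ e²`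
the sum is at most its value `ζ(3/2)² - 1 - 2^{-1/2}` at `x = 2`, with `ζ(3/2) ≤ 2.701`,
while `log x / √x` increases on `(0, e²]`.
-/

open Real Finset

lemma rpow_neg_one_half {t : ℝ} (ht : 0 ≤ t) : t ^ (-(1 : ℝ) / 2) = (√t)⁻¹ := by
  rw [sqrt_eq_rpow, neg_div, rpow_neg ht]

lemma rpow_neg_three_halves {t : ℝ} (ht : 0 ≤ t) : t ^ (-(3 : ℝ) / 2) = (√t ^ 3)⁻¹ := by
  rw [sqrt_eq_rpow, ← rpow_natCast, ← rpow_mul ht, neg_div, rpow_neg ht]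
  norm_num

lemma rpow_neg_three_halves_mul_div {a x : ℝ} (ha : 0 < a) (hx : 0 ≤ x) :
    a ^ (-(3 : ℝ) / 2) * (x / a) ^ (-(1 : ℝ) / 2) = x ^ (-(1 : ℝ) / 2) * a⁻¹ := by
  rw [div_rpow hx ha.le, mul_div_assoc', mul_comm, mul_div_assoc, ← rpow_sub ha]
  norm_num [rpow_neg_one]

lemma rpow_neg_three_halves_le_sub {t : ℝ} (ht : 0 < t) :
    (t + 1) ^ (-(3 : ℝ) / 2) ≤ 2 * t ^ (-(1 : ℝ) / 2) - 2 * (t + 1) ^ (-(1 : ℝ) / 2) := by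
  rw [rpow_neg_three_halves (by positivity), rpow_neg_one_half ht.le,
    rpow_neg_one_half (by positivity)]
  set a := √t
  set b := √(t + 1)
  have ha : 0 < a := sqrt_pos.2 ht
  have hab : a ≤ b := sqrt_le_sqrt (by linarith)
  have hba : b ^ 2 - a ^ 2 = 1 := by
    rw [sq_sqrt ht.le, sq_sqrt (by positivity)]; ring
  -- `b - a = 1 / (a + b)`, so the claim `a ≤ 2 b² (b - a)` reads `a (a + b) ≤ 2 b²`
  have key : a ≤ 2 * b ^ 2 * (b - a) := by
    nlinarith [mul_le_mul hab hab ha.le (ha.trans_le hab).le]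
  have hb : 0 < b := ha.trans_le hab
  have hdiff :
      2 * a⁻¹ - 2 * b⁻¹ - (b ^ 3)⁻¹ = (2 * b ^ 2 * (b - a) - a) / (a * b ^ 3) := by
    field_simp
  rw [← sub_nonneg, hdiff]
  exact div_nonneg (by linarith) (by positivity)

lemma log_div_self_monotoneOn : MonotoneOn (fun x : ℝ ↦ log x / x) (Set.Ioc 0 (exp 1)) := by
  rintro x ⟨hx, -⟩ y ⟨hy, hye⟩ hxy
  have hlog_le : log x ≤ x / y := by
    have := log_le_sub_one_of_pos (div_pos hx (exp_pos 1))
    rw [log_div hx.ne' (exp_pos 1).ne', log_exp] at this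
    calc log x ≤ x / exp 1 := by linarith
      _ ≤ x / y := div_le_div_of_nonneg_left hx.le hy hye
  have hgap : 1 - x / y ≤ log y - log x := by
    have := one_sub_inv_le_log_of_pos (div_pos hy hx)
    rwa [inv_div, log_div hy.ne' hx.ne'] at this
  rw [div_le_div_iff₀ hx hy]
  -- `y log x - x log y ≤ (y - x) (log x - x / y) ≤ 0`
  have : (y - x) * (log x - x / y) ≤ 0 :=
    mul_nonpos_of_nonneg_of_nonpos (by linarith) (by linarith)
  have hxy' : x * (1 - x / y) = (y - x) * (x / y) := by field_simp
  nlinarith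

lemma log_div_sqrt_monotoneOn :
    MonotoneOn (fun x : ℝ ↦ log x / √x) (Set.Ioc 0 (exp 2)) := by
  rintro x ⟨hx, hxe⟩ y ⟨hy, hye⟩ hxy
  have hsqrt_le {z : ℝ} (hz : z ≤ exp 2) : √z ≤ exp 1 := by
    rw [sqrt_le_left (exp_pos 1).le, ← exp_nat_mul]; norm_num [hz]
  have key := log_div_self_monotoneOn ⟨sqrt_pos.2 hx, hsqrt_le hxe⟩
    ⟨sqrt_pos.2 hy, hsqrt_le hye⟩ (sqrt_le_sqrt hxy)
  simp only [log_sqrt hx.le, log_sqrt hy.le, div_right_comm _ (2 : ℝ)] at key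
  linarith

lemma tsum_ite_natCast_lt_eq_add {f : ℕ → ℝ} (n : ℕ)
    (hf : Summable fun b : ℕ => if (n : ℝ) < b then f b else 0) :
    ∑' b : ℕ, (if (n : ℝ) < b then f b else 0) =
      f (n + 1) + ∑' b : ℕ, if ((n + 1 : ℕ) : ℝ) < b then f b else 0 := by
  rw [hf.tsum_eq_add_tsum_ite (n + 1), if_pos (by push_cast; linarith)]
  congr 2 with b
  split_ifs <;> first | rfl | (norm_cast at *; omega)

lemma hasSum_card_divisors_smul {α : Type*} [AddCommGroup α] [UniformSpace α]
    [IsUniformAddGroup α] [CompleteSpace α] [T2Space α] {F : ℕ → α} (hF : F 0 = 0) {S : α}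
    (h : HasSum (fun p : ℕ × ℕ => F (p.1 * p.2)) S) :
    HasSum (fun c => c.divisors.card • F c) S := by
  convert h.tsum_fiberwise (fun p : ℕ × ℕ => p.1 * p.2) with c
  rw [tsum_congr fun p : (fun p : ℕ × ℕ => p.1 * p.2) ⁻¹' {c} => congrArg F p.2]
  rcases eq_or_ne c 0 with rfl | hc
  · simp [hF]
  · have hfiber : (fun p : ℕ × ℕ => p.1 * p.2) ⁻¹' {c} = c.divisorsAntidiagonal := by
      ext; simp [hc]
    rw [hfiber, Finset.tsum_subtype' c.divisorsAntidiagonal fun _ => F c, sum_const,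
      ← Nat.map_div_right_divisors, card_map]

noncomputable def zetaTail (y : ℝ) : ℝ :=
  ∑' b : ℕ, if y < b then (b : ℝ) ^ (-(3 : ℝ) / 2) else 0

lemma summable_zetaTail (y : ℝ) :
    Summable fun b : ℕ => if y < b then (b : ℝ) ^ (-(3 : ℝ) / 2) else 0 :=
  (summable_nat_rpow (p := -(3 : ℝ) / 2) |>.2 (by norm_num)).of_nonneg_of_le
    (fun b => by positivity) (fun b => by split_ifs <;> [exact le_rfl; positivity])

lemma zetaTail_nonneg (y : ℝ) : 0 ≤ zetaTail y :=
  tsum_nonneg fun b => by positivity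

lemma zetaTail_antitone : Antitone zetaTail := by
  intro y y' h
  refine (summable_zetaTail y').tsum_le_tsum (fun b => ?_) (summable_zetaTail y)
  split_ifs with h₁ h₂ <;> first | positivity | linarith

lemma zetaTail_zero : zetaTail 0 = ∑' b : ℕ, (b : ℝ) ^ (-(3 : ℝ) / 2) := by
  refine tsum_congr fun b => ?_
  rcases Nat.eq_zero_or_pos b with rfl | hb
  · simp [zero_rpow (show -(3 : ℝ) / 2 ≠ 0 by norm_num)]
  · exact if_pos (by exact_mod_cast hb)

lemma zetaTail_natCast (n : ℕ) :
    zetaTail n = ((n + 1 : ℕ) : ℝ) ^ (-(3 : ℝ) / 2) + zetaTail (n + 1 : ℕ) :=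
  tsum_ite_natCast_lt_eq_add n (summable_zetaTail n)

lemma zetaTail_natCast_le {n : ℕ} (hn : 0 < n) :
    zetaTail n ≤ 2 * (n : ℝ) ^ (-(1 : ℝ) / 2) := by
  have hshift := (summable_zetaTail n).sum_add_tsum_nat_add (n + 1)
  have hhead :
      ∑ b ∈ range (n + 1), (if (n : ℝ) < b then (b : ℝ) ^ (-(3 : ℝ) / 2) else 0) = 0 :=
    sum_eq_zero fun b hb => if_neg (by have := mem_range.1 hb; norm_cast; omega)
  have htail (k : ℕ) : (n : ℝ) < ((k + (n + 1) : ℕ) : ℝ) := by norm_cast; omega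
  rw [zetaTail, ← hshift, hhead, zero_add, tsum_congr fun k => if_pos (htail k)]
  set h : ℕ → ℝ := fun k => 2 * ((n + k : ℕ) : ℝ) ^ (-(1 : ℝ) / 2)
  refine tsum_le_of_sum_range_le (fun k => by positivity) fun N => ?_
  calc ∑ k ∈ range N, ((k + (n + 1) : ℕ) : ℝ) ^ (-(3 : ℝ) / 2)
      ≤ ∑ k ∈ range N, (h k - h (k + 1)) := sum_le_sum fun k _ => by
        have e₁ : ((k + (n + 1) : ℕ) : ℝ) = ((n + k : ℕ) : ℝ) + 1 := by push_cast; ring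
        have e₂ : ((n + (k + 1) : ℕ) : ℝ) = ((n + k : ℕ) : ℝ) + 1 := by push_cast; ring
        simp only [h, e₁, e₂]
        exact rpow_neg_three_halves_le_sub (by positivity)
    _ = h 0 - h N := sum_range_sub' h N
    _ ≤ 2 * (n : ℝ) ^ (-(1 : ℝ) / 2) := by
        have : 0 ≤ h N := by simp only [h]; positivity
        simp only [h, add_zero] at this ⊢; linarith

lemma zetaTail_le {y : ℝ} (hy : 1 ≤ y) : zetaTail y ≤ 3 * y ^ (-(1 : ℝ) / 2) := by
  set n := ⌊y⌋₊
  have hn : 0 < n := Nat.floor_pos.2 hy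
  have hfloor : zetaTail y = zetaTail n := by
    unfold zetaTail
    congr 1 with b
    exact if_congr (by rw [Nat.cast_lt, Nat.floor_lt (by linarith)]) rfl rfl
  have hyn : 4 * y ≤ 9 * n := by
    have := Nat.lt_floor_add_one y
    have : (1 : ℝ) ≤ n := by exact_mod_cast hn
    linarith
  have hsqrt : 2 * √y ≤ 3 * √n := by
    nlinarith [sq_sqrt (show (0 : ℝ) ≤ y by linarith), sq_sqrt (Nat.cast_nonneg (α := ℝ) n),
      sqrt_nonneg y, sqrt_nonneg (n : ℝ)]
  refine hfloor ▸ (zetaTail_natCast_le hn).trans ?_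
  rw [rpow_neg_one_half (by positivity), rpow_neg_one_half (by linarith), ← div_eq_mul_inv,
    ← div_eq_mul_inv, div_le_div_iff₀ (by positivity) (sqrt_pos.2 (by linarith))]
  linarith

lemma zetaTail_zero_le : zetaTail 0 ≤ 2.701 := by
  have hpeel := zetaTail_natCast 0
  rw [zetaTail_natCast 1, zetaTail_natCast 2] at hpeel
  have htail := zetaTail_natCast_le (n := 3) (by norm_num)
  simp only [Nat.cast_zero, Nat.reduceAdd, Nat.cast_one, Nat.cast_ofNat, one_rpow,
    rpow_neg_three_halves (show (0 : ℝ) ≤ 2 by norm_num),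
    rpow_neg_three_halves (show (0 : ℝ) ≤ 3 by norm_num),
    rpow_neg_one_half (show (0 : ℝ) ≤ 3 by norm_num)] at hpeel htail
  have hsq₂ := sq_sqrt (show (0 : ℝ) ≤ 2 by norm_num)
  have hsq₃ := sq_sqrt (show (0 : ℝ) ≤ 3 by norm_num)
  have hsqrt₂ : 1.4142 < √2 := by rw [lt_sqrt (by norm_num)]; norm_num
  have hsqrt₃ : 1.732 < √3 := by rw [lt_sqrt (by norm_num)]; norm_num
  have h₂ : (√2 ^ 3)⁻¹ ≤ 0.35356 := by
    rw [inv_le_comm₀ (by positivity) (by norm_num)]; nlinarith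
  have h₃ : (√3 ^ 3)⁻¹ ≤ 0.19246 := by
    rw [inv_le_comm₀ (by positivity) (by norm_num)]; nlinarith
  have h₃' : (√3)⁻¹ ≤ 0.57737 := by
    rw [inv_le_comm₀ (by positivity) (by norm_num)]; nlinarith
  linarith

noncomputable def divisorTerm (x : ℝ) (c : ℕ) : ℝ :=
  if x < c then (c.divisors.card : ℝ) * (c : ℝ) ^ (-(3 : ℝ) / 2) else 0

lemma summable_rpow_mul_zetaTail_div {x : ℝ} (hx : 0 ≤ x) :
    Summable fun a : ℕ => (a : ℝ) ^ (-(3 : ℝ) / 2) * zetaTail (x / a) :=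
  ((summable_nat_rpow.2 (by norm_num)).mul_right (zetaTail 0)).of_nonneg_of_le
    (fun a => mul_nonneg (by positivity) (zetaTail_nonneg _))
    (fun a => mul_le_mul_of_nonneg_left (zetaTail_antitone (by positivity)) (by positivity))

lemma hasSum_divisorTerm {x : ℝ} (hx : 0 ≤ x) :
    HasSum (divisorTerm x) (∑' a : ℕ, (a : ℝ) ^ (-(3 : ℝ) / 2) * zetaTail (x / a)) := by
  set F : ℕ → ℝ := fun c => if x < c then (c : ℝ) ^ (-(3 : ℝ) / 2) else 0
  have hpair (a b : ℕ) : F (a * b) =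
      (a : ℝ) ^ (-(3 : ℝ) / 2) * if x / a < b then (b : ℝ) ^ (-(3 : ℝ) / 2) else 0 := by
    rcases Nat.eq_zero_or_pos a with rfl | ha
    · simp [F, hx.not_gt]
    · have ha' : (0 : ℝ) < a := by exact_mod_cast ha
      simp only [F, Nat.cast_mul, mul_ite, mul_zero, div_lt_iff₀ ha', mul_comm (b : ℝ),
        mul_rpow (Nat.cast_nonneg a) (Nat.cast_nonneg b)]
  have hfiber (a : ℕ) :
      HasSum (fun b => F (a * b)) ((a : ℝ) ^ (-(3 : ℝ) / 2) * zetaTail (x / a)) := by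
    simp_rw [hpair]
    exact (summable_zetaTail _).hasSum.mul_left _
  have hprod : Summable fun p : ℕ × ℕ => F (p.1 * p.2) :=
    (summable_prod_of_nonneg fun p => by dsimp only [F]; split_ifs <;> positivity).2
      ⟨fun a => (hfiber a).summable,
        by simpa only [(hfiber _).tsum_eq] using summable_rpow_mul_zetaTail_div hx⟩
  have hF : F 0 = 0 := if_neg (by simpa using hx.not_gt)
  have hpairs : HasSum (fun p : ℕ × ℕ => F (p.1 * p.2))
      (∑' a : ℕ, (a : ℝ) ^ (-(3 : ℝ) / 2) * zetaTail (x / a)) := by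
    convert hprod.hasSum using 1
    rw [hprod.tsum_prod]
    exact tsum_congr fun a => (hfiber a).tsum_eq.symm
  have hterm : divisorTerm x = fun c => c.divisors.card • F c := by
    ext c
    simp only [divisorTerm, F, nsmul_eq_mul, mul_ite, mul_zero]
  rw [hterm]
  exact hasSum_card_divisors_smul hF hpairs

lemma rpow_mul_zetaTail_div_le {x : ℝ} (hx : 0 ≤ x) (a : ℕ) :
    (a : ℝ) ^ (-(3 : ℝ) / 2) * zetaTail (x / a) ≤
      (if a ∈ Icc 1 ⌊x⌋₊ then 3 * x ^ (-(1 : ℝ) / 2) * (a : ℝ)⁻¹ else 0) +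
        zetaTail 0 * if x < a then (a : ℝ) ^ (-(3 : ℝ) / 2) else 0 := by
  set near := if a ∈ Icc 1 ⌊x⌋₊ then 3 * x ^ (-(1 : ℝ) / 2) * (a : ℝ)⁻¹ else 0
  set far := if x < a then (a : ℝ) ^ (-(3 : ℝ) / 2) else 0
  have hnear : 0 ≤ near := by dsimp only [near]; split_ifs <;> positivity
  have hfar : 0 ≤ zetaTail 0 * far :=
    mul_nonneg (zetaTail_nonneg 0) (by dsimp only [far]; split_ifs <;> positivity)
  rcases Nat.eq_zero_or_pos a with rfl | ha
  · simp only [Nat.cast_zero, zero_rpow (show -(3 : ℝ) / 2 ≠ 0 by norm_num), zero_mul]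
    exact add_nonneg hnear hfar
  rcases le_or_gt a ⌊x⌋₊ with hax | hxa
  · have ha' : (0 : ℝ) < a := by exact_mod_cast ha
    have hax' : (a : ℝ) ≤ x := (Nat.le_floor_iff hx).1 hax
    calc (a : ℝ) ^ (-(3 : ℝ) / 2) * zetaTail (x / a)
        ≤ (a : ℝ) ^ (-(3 : ℝ) / 2) * (3 * (x / a) ^ (-(1 : ℝ) / 2)) :=
          mul_le_mul_of_nonneg_left (zetaTail_le ((one_le_div ha').2 hax')) (by positivity)
      _ = near := by
          rw [mul_left_comm, rpow_neg_three_halves_mul_div ha' hx, ← mul_assoc]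
          exact (if_pos (mem_Icc.2 ⟨ha, hax⟩)).symm
      _ ≤ near + zetaTail 0 * far := le_add_of_nonneg_right hfar
  · calc (a : ℝ) ^ (-(3 : ℝ) / 2) * zetaTail (x / a)
        ≤ (a : ℝ) ^ (-(3 : ℝ) / 2) * zetaTail 0 :=
          mul_le_mul_of_nonneg_left (zetaTail_antitone (by positivity)) (by positivity)
      _ = zetaTail 0 * far := by
          rw [mul_comm]; exact congrArg _ (if_pos ((Nat.floor_lt hx).1 hxa)).symm
      _ ≤ near + zetaTail 0 * far := le_add_of_nonneg_left hnear

lemma tsum_divisorTerm_le_of_one_le {x : ℝ} (hx : 1 ≤ x) :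
    ∑' c, divisorTerm x c ≤ x ^ (-(1 : ℝ) / 2) * (3 * log x + 3 + 3 * zetaTail 0) := by
  have hx0 : 0 ≤ x := by linarith
  set n := ⌊x⌋₊
  set near : ℕ → ℝ :=
    fun a => if a ∈ Icc 1 n then 3 * x ^ (-(1 : ℝ) / 2) * (a : ℝ)⁻¹ else 0
  have hnear : Summable near := summable_of_ne_finset_zero (s := Icc 1 n) fun a ha => if_neg ha
  have hfar := (summable_zetaTail x).mul_left (zetaTail 0)
  have hnear_sum : ∑' a, near a = 3 * x ^ (-(1 : ℝ) / 2) * harmonic n := by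
    rw [tsum_eq_sum (s := Icc 1 n) fun a ha => if_neg ha, sum_ite_of_true fun _ h => h,
      ← mul_sum, harmonic_eq_sum_Icc]
    push_cast
    rfl
  calc ∑' c, divisorTerm x c
      = ∑' a : ℕ, (a : ℝ) ^ (-(3 : ℝ) / 2) * zetaTail (x / a) :=
        (hasSum_divisorTerm hx0).tsum_eq
    _ ≤ ∑' a : ℕ, (near a + zetaTail 0 * if x < a then (a : ℝ) ^ (-(3 : ℝ) / 2) else 0) :=
        (summable_rpow_mul_zetaTail_div hx0).tsum_le_tsum (rpow_mul_zetaTail_div_le hx0)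
          (hnear.add hfar)
    _ = 3 * x ^ (-(1 : ℝ) / 2) * harmonic n + zetaTail 0 * zetaTail x := by
        rw [hnear.tsum_add hfar, tsum_mul_left, hnear_sum]
        rfl
    _ ≤ 3 * x ^ (-(1 : ℝ) / 2) * (1 + log x) + zetaTail 0 * (3 * x ^ (-(1 : ℝ) / 2)) := by
        gcongr
        · exact harmonic_floor_le_one_add_log x hx
        · exact zetaTail_nonneg 0
        · exact zetaTail_le hx
    _ = x ^ (-(1 : ℝ) / 2) * (3 * log x + 3 + 3 * zetaTail 0) := by ring

lemma tsum_divisorTerm_le_of_le {x y : ℝ} (hx : 0 ≤ x) (hxy : x ≤ y) :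
    ∑' c, divisorTerm y c ≤ ∑' c, divisorTerm x c := by
  refine (hasSum_divisorTerm (hx.trans hxy)).summable.tsum_le_tsum (fun c => ?_)
    (hasSum_divisorTerm hx).summable
  unfold divisorTerm
  split_ifs with h₁ h₂ <;> first | positivity | linarith

lemma tsum_divisorTerm_zero : ∑' c, divisorTerm 0 c = zetaTail 0 ^ 2 := by
  rw [(hasSum_divisorTerm le_rfl).tsum_eq]
  simp only [zero_div, tsum_mul_right, ← zetaTail_zero, sq]

lemma tsum_divisorTerm_two :
    ∑' c, divisorTerm 2 c = zetaTail 0 ^ 2 - 1 - 2 * 2 ^ (-(3 : ℝ) / 2) := by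
  have hpeel (n : ℕ) :=
    tsum_ite_natCast_lt_eq_add (f := fun c => (c.divisors.card : ℝ) * (c : ℝ) ^ (-(3 : ℝ) / 2)) n
      (hasSum_divisorTerm (Nat.cast_nonneg n)).summable
  have h₀ := hpeel 0
  rw [hpeel 1] at h₀
  have hτ₂ : (Nat.divisors 2).card = 2 := by decide
  simp only [Nat.cast_zero, zero_add, Nat.reduceAdd, Nat.cast_one, Nat.cast_ofNat,
    Nat.divisors_one, card_singleton, one_rpow, mul_one, hτ₂] at h₀
  rw [← tsum_divisorTerm_zero]
  unfold divisorTerm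
  linarith

lemma tsum_divisorTerm_two_le : ∑' c, divisorTerm 2 c ≤ 12 * 2 ^ (-(1 : ℝ) / 2) * log 2 := by
  have hZ : zetaTail 0 ^ 2 ≤ 2.701 ^ 2 :=
    pow_le_pow_left₀ (zetaTail_nonneg 0) zetaTail_zero_le 2
  rw [tsum_divisorTerm_two, rpow_neg_three_halves (by norm_num), rpow_neg_one_half (by norm_num)]
  have hs : 0 < √2 := by positivity
  have hcube : √2 ^ 3 = 2 * √2 := by rw [pow_succ, sq_sqrt (by norm_num)]
  have hs_lt : √2 < 1.4143 := by rw [sqrt_lt' (by norm_num)]; norm_num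
  rw [hcube, ← sub_nonneg]
  have : 12 * (√2)⁻¹ * log 2 - (zetaTail 0 ^ 2 - 1 - 2 * (2 * √2)⁻¹) =
      (1 + 12 * log 2 - √2 * (zetaTail 0 ^ 2 - 1)) / √2 := by
    field_simp; ring
  rw [this]
  refine div_nonneg ?_ hs.le
  nlinarith [log_two_gt_d9]

/-- For every real `x ≥ 2`, the series `Σ_{c > x} τ(c)·c^{−3/2}` (over integers `c > x`)
converges and is at most `12·x^{−1/2}·log x`, where `τ(c)` is the number of positive
divisors of `c`. -/
theorem divisor_sum_tail_bound (x : ℝ) (hx : 2 ≤ x) :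
    Summable (fun c : ℕ =>
      if x < (c : ℝ) then (c.divisors.card : ℝ) * (c : ℝ) ^ (-(3 : ℝ) / 2) else 0) ∧
    ∑' c : ℕ, (if x < (c : ℝ) then (c.divisors.card : ℝ) * (c : ℝ) ^ (-(3 : ℝ) / 2) else 0) ≤
      12 * x ^ (-(1 : ℝ) / 2) * Real.log x := by
  have hx0 : 0 ≤ x := by linarith
  refine ⟨(hasSum_divisorTerm hx0).summable, ?_⟩
  change ∑' c, divisorTerm x c ≤ _
  rcases le_or_gt x (exp 2) with hsmall | hlarge
  · have hmono : log 2 / √2 ≤ log x / √x :=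
      log_div_sqrt_monotoneOn ⟨two_pos, hx.trans hsmall⟩ ⟨by linarith, hsmall⟩ hx
    calc ∑' c, divisorTerm x c
        ≤ ∑' c, divisorTerm 2 c := tsum_divisorTerm_le_of_le zero_le_two hx
      _ ≤ 12 * 2 ^ (-(1 : ℝ) / 2) * log 2 := tsum_divisorTerm_two_le
      _ ≤ 12 * x ^ (-(1 : ℝ) / 2) * log x := by
        rw [rpow_neg_one_half hx0, rpow_neg_one_half zero_le_two, mul_assoc, mul_assoc,
          inv_mul_eq_div, inv_mul_eq_div]
        linarith
  · have hlog : 2 < log x := (lt_log_iff_exp_lt (by linarith)).2 hlarge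
    calc ∑' c, divisorTerm x c ≤ x ^ (-(1 : ℝ) / 2) * (3 * log x + 3 + 3 * zetaTail 0) :=
          tsum_divisorTerm_le_of_one_le (by linarith)
      _ ≤ x ^ (-(1 : ℝ) / 2) * (12 * log x) := by
          gcongr; linarith [zetaTail_zero_le]
      _ = 12 * x ^ (-(1 : ℝ) / 2) * log x := by ring
end

section
/- Let p be an odd prime and let a, s be positive integers with a² − p·s² = 4; set η = (a + s√p)/2 ∈ F = ℚ(√p). Then the ℚ-linear map ψ : ℚ² → F defined by ψ(u, v) = (u·η − v)/√p is bijective and satisfies −2p·N_{F/ℚ}(ψ(u, v)) = 2u² − 2a·u·v + 2v² for all (u, v) ∈ ℚ². Equivalently, ψ is an isometry from ℚ² equipped with the symmetric bilinear form given by the generalized Cartan matrix [[2, −a], [−a, 2]] onto F equipped with the bilinear form ⟨x, y⟩ = −p·Tr_{F/ℚ}(x·ȳ). -/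
/-!
Writing `√p = r`, the relation `r² = p` gives `ψ(u, v) = u·s/2 + ((u·a/2 − v)/p)·r`, so `ψ` is the
embedding `(c, d) ↦ c + d·r` of `ℚ²` onto `ℚ(√p)` (injective since `√p` is irrational) composed with
an invertible change of rational coordinates (invertible since `s ≠ 0`). The norm identity is the
Pell equation `a² − p·s² = 4` after clearing denominators.
-/

open Function

def ratAddRatMul (r : ℝ) (cd : ℚ × ℚ) : ℝ := cd.1 + cd.2 * r

lemma ratAddRatMul_injective {r : ℝ} (hr : Irrational r) : Injective (ratAddRatMul r) := by
  rintro ⟨c₁, d₁⟩ ⟨c₂, d₂⟩ h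
  simp only [ratAddRatMul] at h
  have hd : d₁ = d₂ := by
    by_contra hd
    have hmul : ((d₁ - d₂ : ℚ) : ℝ) * r = ((c₂ - c₁ : ℚ) : ℝ) := by push_cast; linarith
    exact (hr.ratCast_mul (sub_ne_zero.mpr hd)).ne_rat _ hmul
  subst hd
  simpa using h

lemma range_ratAddRatMul (r : ℝ) :
    Set.range (ratAddRatMul r) = {x : ℝ | ∃ c d : ℚ, x = c + d * r} := by
  ext x
  simp [ratAddRatMul, eq_comm]

/-- The coordinates of `ψ(u, v)` in the basis `1, √p` of `ℚ(√p)`. -/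
def rootCoordEquiv (a s p : ℚ) (hs : s ≠ 0) (hp : p ≠ 0) : ℚ × ℚ ≃ ℚ × ℚ where
  toFun uv := (uv.1 * s / 2, (uv.1 * a / 2 - uv.2) / p)
  invFun cd := (2 * cd.1 / s, cd.1 * a / s - p * cd.2)
  left_inv uv := by
    ext
    · field_simp
    · field_simp; ring
  right_inv cd := by
    ext
    · field_simp
    · field_simp; ring

lemma root_map_eq_ratAddRatMul {a s p : ℚ} (hs : s ≠ 0) (hp : p ≠ 0) {r : ℝ} (hr : r * r = p)
    (uv : ℚ × ℚ) :
    ((uv.1 : ℝ) * ((a + s * r) / 2) - uv.2) / r = ratAddRatMul r (rootCoordEquiv a s p hs hp uv) := by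
  have hr0 : r ≠ 0 := left_ne_zero_of_mul (hr ▸ Rat.cast_ne_zero.mpr hp)
  simp only [ratAddRatMul, rootCoordEquiv, Equiv.coe_fn_mk]
  push_cast
  rw [← hr]
  field_simp
  ring

lemma neg_two_mul_mul_conj_eq_cartan {a s p r : ℝ} (hr : r * r = p) (hr0 : r ≠ 0)
    (hpell : a ^ 2 - p * s ^ 2 = 4) (u v : ℝ) :
    -2 * p * (((u * ((a + s * r) / 2) - v) / r) * ((u * ((a - s * r) / 2) - v) / (-r))) =
      2 * u ^ 2 - 2 * a * u * v + 2 * v ^ 2 := by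
  subst hr
  field_simp
  linear_combination u ^ 2 * hpell

theorem isometry_root_space_general (p a s : ℕ) (hp : p.Prime)
    (hs : 0 < s)
    (hpell : (a : ℤ) ^ 2 - (p : ℤ) * (s : ℤ) ^ 2 = 4) :
    Function.Injective (fun uv : ℚ × ℚ =>
      ((uv.1 : ℝ) * (((a : ℝ) + (s : ℝ) * Real.sqrt p) / 2) - (uv.2 : ℝ)) / Real.sqrt p) ∧
    Set.range (fun uv : ℚ × ℚ =>
      ((uv.1 : ℝ) * (((a : ℝ) + (s : ℝ) * Real.sqrt p) / 2) - (uv.2 : ℝ)) / Real.sqrt p)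
      = {x : ℝ | ∃ c d : ℚ, x = (c : ℝ) + (d : ℝ) * Real.sqrt p} ∧
    ∀ u v : ℚ,
      -2 * (p : ℝ) *
        ((((u : ℝ) * (((a : ℝ) + (s : ℝ) * Real.sqrt p) / 2) - (v : ℝ)) / Real.sqrt p) *
         (((u : ℝ) * (((a : ℝ) - (s : ℝ) * Real.sqrt p) / 2) - (v : ℝ)) / (-Real.sqrt p))) =
      2 * (u : ℝ) ^ 2 - 2 * (a : ℝ) * (u : ℝ) * (v : ℝ) + 2 * (v : ℝ) ^ 2 := by
  have hsqrt : √(p : ℝ) * √(p : ℝ) = p := Real.mul_self_sqrt p.cast_nonneg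
  have hsQ : (s : ℚ) ≠ 0 := by exact_mod_cast hs.ne'
  have hpQ : (p : ℚ) ≠ 0 := by exact_mod_cast hp.ne_zero
  set e := rootCoordEquiv a s p hsQ hpQ
  have hψ : (fun uv : ℚ × ℚ => ((uv.1 : ℝ) * (((a : ℝ) + (s : ℝ) * √(p : ℝ)) / 2) - uv.2) / √(p : ℝ))
      = ratAddRatMul √(p : ℝ) ∘ e := by
    funext uv
    rw [comp_apply, ← root_map_eq_ratAddRatMul hsQ hpQ (by exact_mod_cast hsqrt)]
    simp
  refine ⟨hψ ▸ (ratAddRatMul_injective hp.irrational_sqrt).comp e.injective, ?_, fun u v => ?_⟩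
  · rw [hψ, e.surjective.range_comp, range_ratAddRatMul]
  · exact neg_two_mul_mul_conj_eq_cartan hsqrt (Real.sqrt_pos.mpr (by exact_mod_cast hp.pos)).ne'
      (by exact_mod_cast hpell) u v

/-- Let `p` be an odd prime and `a, s` positive integers with `a² − p·s² = 4`; set
`η = (a + s√p)/2 ∈ F = ℚ(√p) ⊂ ℝ`, with Galois conjugate `η̄ = (a − s√p)/2`. The
`ℚ`-linear map `ψ : ℚ² → F`, `ψ(u, v) = (u·η − v)/√p`, is injective with range `F`
(hence bijective onto `F`), and satisfies
`−2p·N_{F/ℚ}(ψ(u, v)) = 2u² − 2a·u·v + 2v²`, where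
`N(ψ(u, v)) = ((u·η − v)/√p)·((u·η̄ − v)/(−√p))`; i.e. `ψ` is an isometry from `ℚ²`
with the bilinear form of the Cartan matrix `[[2, −a], [−a, 2]]` onto `F` with
`⟨x, y⟩ = −p·Tr(x·ȳ)`. -/
theorem isometry_root_space (p a s : ℕ) (hp : p.Prime) (hodd : Odd p)
    (ha : 0 < a) (hs : 0 < s)
    (hpell : (a : ℤ) ^ 2 - (p : ℤ) * (s : ℤ) ^ 2 = 4) :
    Function.Injective (fun uv : ℚ × ℚ =>
      ((uv.1 : ℝ) * (((a : ℝ) + (s : ℝ) * Real.sqrt p) / 2) - (uv.2 : ℝ)) / Real.sqrt p) ∧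
    Set.range (fun uv : ℚ × ℚ =>
      ((uv.1 : ℝ) * (((a : ℝ) + (s : ℝ) * Real.sqrt p) / 2) - (uv.2 : ℝ)) / Real.sqrt p)
      = {x : ℝ | ∃ c d : ℚ, x = (c : ℝ) + (d : ℝ) * Real.sqrt p} ∧
    ∀ u v : ℚ,
      -2 * (p : ℝ) *
        ((((u : ℝ) * (((a : ℝ) + (s : ℝ) * Real.sqrt p) / 2) - (v : ℝ)) / Real.sqrt p) *
         (((u : ℝ) * (((a : ℝ) - (s : ℝ) * Real.sqrt p) / 2) - (v : ℝ)) / (-Real.sqrt p))) =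
      2 * (u : ℝ) ^ 2 - 2 * (a : ℝ) * (u : ℝ) * (v : ℝ) + 2 * (v : ℝ) ^ 2 :=
  isometry_root_space_general p a s hp hs hpell
end
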